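/- Let 1 < p ≤ 2, d ≥ 2, and let x ∈ ℝ^d with ‖x‖_p = 1 and all coordinates nonnegative. Let u = γ·(x₁^{p−1},…,x_d^{p−1}) with γ = (Σ_j x_j^{2(p−1)})^{−1/2} be the outward unit normal to the l_p sphere at x, and let v be any unit vector orthogonal to u. Then there exist β = β(d) > 0 and α = α(d,p) > 0 such that for every δ ∈ (0, α), the point x − δu + β·δ^{1/p}·v lies in the l_p unit ball B_p^d = {z : Σ|z_j|^p ≤ 1}. -/

import Mathlib

/-!
Write the new point as `x + b` with `b = β δ^{1/p} v - δ u`. For `a ≥ 0` and `1 < p ≤ 2`, the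
tangent line of `t ↦ t^p` at `a + b ≥ 0` and the `(p-1)`-Hölder continuity of `t ↦ t^{p-1}`
give `|a + b|^p ≤ a^p + p a^{p-1} b + 3 |b|^p` (if `a + b < 0`, then `a ≤ |b|` suffices), so
`∑ |x_j + b_j|^p ≤ 1 + p ⟪x^{p-1}, b⟫ + 3 ∑ |b_j|^p`. As `v ⟂ u`, the first-order term equals
`-p δ ‖x^{p-1}‖₂`, and `‖x^{p-1}‖₂ ≥ 1/d` because some `x_j^p ≥ 1/d`. Once `δ^{p-1} ≤ β`, every
`|b_j|^p ≤ 4 β δ`, so for `β = 1/(12 d²)` the first-order gain outweighs the error.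
-/

open Real Finset

lemma rpow_sub_one_mul_self {p t : ℝ} (ht : 0 ≤ t) (hp : p ≠ 0) : t ^ (p - 1) * t = t ^ p := by
  conv_rhs => rw [← sub_add_cancel p 1, rpow_add' ht (by simpa using hp), rpow_one]

lemma add_rpow_le_two_mul_add_rpow {p a b : ℝ} (hp1 : 1 ≤ p) (hp2 : p ≤ 2) (ha : 0 ≤ a)
    (hb : 0 ≤ b) : (a + b) ^ p ≤ 2 * (a ^ p + b ^ p) := by
  lift a to NNReal using ha
  lift b to NNReal using hb
  have h2 : (2 : ℝ) ^ (p - 1) ≤ 2 := by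
    simpa using rpow_le_rpow_of_exponent_le one_le_two (show p - 1 ≤ 1 by linarith)
  calc ((a : ℝ) + b) ^ p ≤ (2 : ℝ) ^ (p - 1) * ((a : ℝ) ^ p + (b : ℝ) ^ p) := by
        exact_mod_cast NNReal.rpow_add_le_mul_rpow_add_rpow a b hp1
    _ ≤ 2 * ((a : ℝ) ^ p + (b : ℝ) ^ p) := by gcongr

lemma rpow_add_mul_rpow_sub_one_mul_sub_le_rpow {p a c : ℝ} (hp : 1 < p) (ha : 0 ≤ a)
    (hc : 0 ≤ c) : c ^ p + p * c ^ (p - 1) * (a - c) ≤ a ^ p := by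
  rcases hc.eq_or_lt with rfl | hc
  · simp [zero_rpow (by linarith : p ≠ 0), zero_rpow (by linarith : p - 1 ≠ 0), rpow_nonneg ha]
  have bernoulli := one_add_mul_self_le_rpow_one_add (s := a / c - 1)
    (by linarith [div_nonneg ha hc.le]) hp.le
  rw [add_sub_cancel, div_rpow ha hc.le, le_div_iff₀ (rpow_pos_of_pos hc p)] at bernoulli
  calc c ^ p + p * c ^ (p - 1) * (a - c) = (1 + p * (a / c - 1)) * c ^ p := by
        rw [← rpow_sub_one_mul_self hc.le (by linarith : p ≠ 0)]; field_simp
    _ ≤ a ^ p := bernoulli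

lemma abs_rpow_sub_rpow_le_abs_sub_rpow {q a c : ℝ} (hq0 : 0 ≤ q) (hq1 : q ≤ 1) (ha : 0 ≤ a)
    (hc : 0 ≤ c) : |c ^ q - a ^ q| ≤ |c - a| ^ q := by
  wlog hac : a ≤ c generalizing a c
  · rw [abs_sub_comm, abs_sub_comm c]
    exact this hc ha (le_of_not_ge hac)
  rw [abs_of_nonneg (sub_nonneg.2 (rpow_le_rpow ha hac hq0)), abs_of_nonneg (sub_nonneg.2 hac)]
  have := rpow_add_le_add_rpow ha (sub_nonneg.2 hac) hq0 hq1
  rw [add_sub_cancel] at this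
  linarith

lemma abs_add_rpow_le {p a : ℝ} (hp1 : 1 < p) (hp2 : p ≤ 2) (ha : 0 ≤ a) (b : ℝ) :
    |a + b| ^ p ≤ a ^ p + p * a ^ (p - 1) * b + 3 * |b| ^ p := by
  have hbp : |b| ^ (p - 1) * |b| = |b| ^ p := rpow_sub_one_mul_self (abs_nonneg b) (by linarith)
  have hb0 : 0 ≤ |b| ^ p := rpow_nonneg (abs_nonneg b) p
  rcases le_or_gt 0 (a + b) with hab | hab
  · have tangent := rpow_add_mul_rpow_sub_one_mul_sub_le_rpow hp1 ha hab
    have holder : ((a + b) ^ (p - 1) - a ^ (p - 1)) * b ≤ |b| ^ p := by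
      calc _ ≤ |(a + b) ^ (p - 1) - a ^ (p - 1)| * |b| := by rw [← abs_mul]; exact le_abs_self _
        _ ≤ |b| ^ (p - 1) * |b| := by
          gcongr
          simpa using abs_rpow_sub_rpow_le_abs_sub_rpow (by linarith) (by linarith) ha hab
        _ = |b| ^ p := hbp
    rw [abs_of_nonneg hab]
    nlinarith [mul_le_mul_of_nonneg_left holder (by linarith : (0 : ℝ) ≤ p)]
  · have hb : b < 0 := by linarith
    have hle : |a + b| ≤ |b| := by rw [abs_of_neg hab, abs_of_neg hb]; linarith
    have hcross : a ^ (p - 1) * |b| ≤ |b| ^ p := by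
      rw [← hbp]
      gcongr
      rw [abs_of_neg hb]; linarith
    have hpow := rpow_le_rpow (abs_nonneg _) hle (by linarith : 0 ≤ p)
    rw [abs_of_neg hb] at hcross hb0 hpow ⊢
    nlinarith [rpow_nonneg ha p, mul_le_mul_of_nonneg_left hcross (by linarith : (0 : ℝ) ≤ p)]

lemma abs_mul_rpow_one_div_mul_sub_mul_rpow_le {p β δ s t : ℝ} (hp1 : 1 ≤ p) (hp2 : p ≤ 2)
    (hβ0 : 0 ≤ β) (hβ1 : β ≤ 1) (hδ : 0 ≤ δ) (hδβ : δ ^ (p - 1) ≤ β) (hs : |s| ≤ 1)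
    (ht : |t| ≤ 1) : |β * δ ^ (1 / p) * s - δ * t| ^ p ≤ 4 * β * δ := by
  have hp0 : 0 < p := by linarith
  have hc : 0 ≤ β * δ ^ (1 / p) := by positivity
  have habs : |β * δ ^ (1 / p) * s - δ * t| ≤ β * δ ^ (1 / p) + δ := by
    calc _ ≤ |β * δ ^ (1 / p) * s| + |δ * t| := abs_sub _ _
      _ ≤ β * δ ^ (1 / p) + δ := by
        rw [abs_mul _ s, abs_mul δ t, abs_of_nonneg hc, abs_of_nonneg hδ]
        exact add_le_add (mul_le_of_le_one_right hc hs) (mul_le_of_le_one_right hδ ht)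
  have hfirst : (β * δ ^ (1 / p)) ^ p ≤ β * δ := by
    rw [mul_rpow hβ0 (by positivity), ← rpow_mul hδ, one_div_mul_cancel hp0.ne', rpow_one]
    gcongr
    exact rpow_le_self_of_le_one hβ0 hβ1 hp1
  have hsecond : δ ^ p ≤ β * δ := by
    rw [← rpow_sub_one_mul_self hδ hp0.ne']
    gcongr
  calc _ ≤ (β * δ ^ (1 / p) + δ) ^ p := rpow_le_rpow (abs_nonneg _) habs hp0.le
    _ ≤ 2 * ((β * δ ^ (1 / p)) ^ p + δ ^ p) := add_rpow_le_two_mul_add_rpow hp1 hp2 hc hδ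
    _ ≤ 4 * β * δ := by linarith

section FiniteSums

variable {ι : Type*} [Fintype ι]

lemma abs_le_one_of_sum_sq_eq_one {v : ι → ℝ} (hv : ∑ j, v j ^ 2 = 1) (j : ι) : |v j| ≤ 1 := by
  rw [← sq_le_one_iff_abs_le_one, ← hv]
  exact single_le_sum (fun i _ => sq_nonneg (v i)) (mem_univ j)

lemma abs_inv_sqrt_sum_sq_mul_le_one (w : ι → ℝ) (j : ι) :
    |(√(∑ i, w i ^ 2))⁻¹ * w j| ≤ 1 := by
  rw [abs_mul, abs_inv, abs_of_nonneg (sqrt_nonneg _)]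
  exact inv_mul_le_one_of_le₀
    (abs_le_sqrt (single_le_sum (fun i _ => sq_nonneg (w i)) (mem_univ j))) (sqrt_nonneg _)

lemma sum_mul_sub_mul_inv_sqrt_sum_sq_mul {w v : ι → ℝ} (hwv : ∑ j, w j * v j = 0) (c δ : ℝ) :
    ∑ j, w j * (c * v j - δ * ((√(∑ i, w i ^ 2))⁻¹ * w j)) = -(δ * √(∑ i, w i ^ 2)) := by
  calc _ = c * ∑ j, w j * v j - δ * ((√(∑ i, w i ^ 2))⁻¹ * ∑ j, w j ^ 2) := by
        simp only [mul_sum, ← sum_sub_distrib]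
        exact sum_congr rfl fun j _ => by ring
    _ = -(δ * √(∑ i, w i ^ 2)) := by rw [hwv, inv_mul_eq_div, div_sqrt]; ring

lemma sum_rpow_two_mul_rpow_neg_one_div_two {q : ℝ} {x : ι → ℝ} (hx : ∀ j, 0 ≤ x j) :
    (∑ i, x i ^ (2 * q)) ^ (-(1 : ℝ) / 2) = (√(∑ i, (x i ^ q) ^ 2))⁻¹ := by
  have hsq : ∀ i, x i ^ (2 * q) = (x i ^ q) ^ 2 := fun i => by
    rw [mul_comm, rpow_mul (hx i), rpow_two]
  simp only [hsq]
  rw [sqrt_eq_rpow, ← rpow_neg (sum_nonneg fun i _ => sq_nonneg _)]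
  norm_num

lemma inv_card_le_sqrt_sum_rpow_sub_one_sq {p : ℝ} (hp : 1 ≤ p) {x : ι → ℝ}
    (hx : ∀ j, 0 ≤ x j) (hxs : ∑ j, x j ^ p = 1) :
    (Fintype.card ι : ℝ)⁻¹ ≤ √(∑ j, (x j ^ (p - 1)) ^ 2) := by
  have hne : (univ : Finset ι).Nonempty := by
    by_contra h
    simp [not_nonempty_iff_eq_empty.1 h] at hxs
  have hcard : (Fintype.card ι : ℝ) ≠ 0 := by exact_mod_cast hne.card_pos.ne'
  obtain ⟨j, -, hj⟩ := exists_le_of_sum_le hne (f := fun _ => (Fintype.card ι : ℝ)⁻¹)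
    (g := fun j => x j ^ p) (by rw [sum_const, card_univ, nsmul_eq_mul, mul_inv_cancel₀ hcard, hxs])
  have hxj : x j ≤ 1 := by
    by_contra h
    have := one_lt_rpow (lt_of_not_ge h) (by linarith : 0 < p)
    have := single_le_sum (fun i _ => rpow_nonneg (hx i) p) (mem_univ j)
    linarith
  calc _ ≤ x j ^ p := hj
    _ ≤ x j ^ (p - 1) := rpow_le_rpow_of_exponent_ge' (hx j) hxj (by linarith) (by linarith)
    _ ≤ √(∑ j, (x j ^ (p - 1)) ^ 2) := (le_abs_self _).trans <| abs_le_sqrt <|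
      single_le_sum (fun i _ => sq_nonneg (x i ^ (p - 1))) (mem_univ j)

lemma sum_abs_add_rpow_le_one {p ε : ℝ} (hp1 : 1 < p) (hp2 : p ≤ 2) {x b : ι → ℝ}
    (hx : ∀ j, 0 ≤ x j) (hxs : ∑ j, x j ^ p = 1) (hb : ∀ j, |b j| ^ p ≤ ε)
    (hgain : 3 * Fintype.card ι * ε ≤ -(p * ∑ j, x j ^ (p - 1) * b j)) :
    ∑ j, |x j + b j| ^ p ≤ 1 := by
  calc ∑ j, |x j + b j| ^ p ≤ ∑ j, (x j ^ p + p * x j ^ (p - 1) * b j + 3 * |b j| ^ p) :=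
        sum_le_sum fun j _ => abs_add_rpow_le hp1 hp2 (hx j) (b j)
    _ = 1 + p * ∑ j, x j ^ (p - 1) * b j + 3 * ∑ j, |b j| ^ p := by
        simp only [sum_add_distrib, hxs, mul_sum, mul_assoc]
    _ ≤ 1 + p * ∑ j, x j ^ (p - 1) * b j + 3 * (Fintype.card ι * ε) := by
        gcongr
        simpa using sum_le_card_nsmul univ _ ε fun j _ => hb j
    _ ≤ 1 := by linarith

end FiniteSums

/-- For `1 < p ≤ 2`, `d ≥ 2`, a point `x` on the positive part of the unit
`l_p` sphere with outward unit normal `u = γ(x₁^{p-1},…,x_d^{p-1})`,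
`γ = (∑ x_j^{2(p-1)})^{-1/2}`, and any unit vector `v ⟂ u`, there exist `β = β(d) > 0` and
`α = α(d,p) > 0` such that for all `δ ∈ (0,α)` the point `x - δu + βδ^{1/p}v` lies in the
`l_p` unit ball. -/
theorem stmt13 (d : ℕ) (hd : 2 ≤ d) :
    ∃ β : ℝ, 0 < β ∧ ∀ p : ℝ, 1 < p → p ≤ 2 →
      ∃ α : ℝ, 0 < α ∧ ∀ x v : Fin d → ℝ,
        (∀ j, 0 ≤ x j) → (∑ j, (x j) ^ p = 1) →
        (∑ j, (v j) ^ 2 = 1) → (∑ j, (x j) ^ (p - 1) * v j = 0) →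
        ∀ δ : ℝ, 0 < δ → δ < α →
          ∑ j, |x j - δ * ((∑ i, (x i) ^ (2 * (p - 1))) ^ (-(1 : ℝ) / 2) * (x j) ^ (p - 1))
                + β * δ ^ (1 / p) * v j| ^ p ≤ 1 := by
  have hd1 : (1 : ℝ) ≤ d := by exact_mod_cast (by omega : 1 ≤ d)
  set β : ℝ := (12 * (d : ℝ) ^ 2)⁻¹ with hβ
  have hβ0 : 0 < β := by positivity
  have hβ1 : β ≤ 1 := inv_le_one_of_one_le₀ (by nlinarith)
  refine ⟨β, hβ0, fun p hp1 hp2 => ⟨β ^ (p - 1)⁻¹, by positivity, ?_⟩⟩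
  intro x v hx hxs hv hov δ hδ hδα
  have hδβ : δ ^ (p - 1) ≤ β := ((lt_rpow_inv_iff_of_pos hδ.le hβ0.le (by linarith)).1 hδα).le
  rw [sum_rpow_two_mul_rpow_neg_one_div_two hx]
  set N := √(∑ i, (x i ^ (p - 1)) ^ 2)
  have hN : (d : ℝ)⁻¹ ≤ N := by simpa using inv_card_le_sqrt_sum_rpow_sub_one_sq hp1.le hx hxs
  have hgain : 3 * (d : ℝ) * (4 * β * δ) ≤ p * (δ * N) := by
    calc 3 * (d : ℝ) * (4 * β * δ) = δ * (d : ℝ)⁻¹ := by rw [hβ]; field_simp; ring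
      _ ≤ δ * N := by gcongr
      _ ≤ p * (δ * N) := le_mul_of_one_le_left (by positivity) hp1.le
  have key := sum_abs_add_rpow_le_one
    (b := fun j => β * δ ^ (1 / p) * v j - δ * (N⁻¹ * x j ^ (p - 1))) hp1 hp2 hx hxs
    (fun j => abs_mul_rpow_one_div_mul_sub_mul_rpow_le hp1.le hp2 hβ0.le hβ1 hδ.le hδβ
      (abs_le_one_of_sum_sq_eq_one hv j) (abs_inv_sqrt_sum_sq_mul_le_one _ j))
    (by rwa [sum_mul_sub_mul_inv_sqrt_sum_sq_mul hov, Fintype.card_fin, mul_neg, neg_neg])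
  convert key using 4 with j
  ring
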